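/- arXiv:2404.17823 — 3 statements merged into one kernel-verified Lean document; each statement's English description precedes it below -/
import Mathlib

section
/- (Probability generating functional of the 1-D Poisson point process.) Let r > 0, let (E_k)_{k≥1} be i.i.d. random variables with exponential distribution of rate r, and set T_k = E₁ + ⋯ + E_k. Then for every measurable function f : [0,∞) → [0,1], E[ Π_{k=1}^∞ f(T_k) ] = exp( −r ∫_0^∞ (1 − f(x)) dx ), where the infinite product is the (almost surely existing) limit of the partial products Π_{k=1}^n f(T_k), and both sides take values in [0,1] (with exp(−∞) interpreted as 0 when ∫_0^∞ (1 − f(x)) dx = ∞). -/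
/-!
Let `H t = exp (-r ∫_t^∞ (1 - f))`. For `t ≥ 0` the function `H` is harmonic for the walk killed
with weight `f`: `∫ f (t + y) H (t + y) r e^{-r y} dy = H t`. After the change of variables
`e^{-r y} H (t + y) = H t · exp (-r ∫_t^{t+y} f)` this is `∫_0^∞ h e^{-∫_0^s h} ds = 1` for
`h = r f (t + ·)`, the fundamental theorem of calculus for the absolutely continuous function
`s ↦ exp (-∫_0^s h)`. Integrating out one step at a time, independence gives
`E[∏_{k ≤ n} f (T_k) · H (T_n)] = H 0` for every `n`. Since `T_n → ∞` almost surely (because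
`E[e^{-T_n}] = (r / (r + 1))^n`) and `H t → 1`, the expected partial products converge to `H 0`.
When `∫_0^∞ (1 - f) = ∞`, compare `f` with its truncations that equal `1` beyond `m`.
-/

open MeasureTheory ProbabilityTheory Set Filter Topology
open scoped ENNReal NNReal

lemma lipschitzOnWith_intervalIntegral {h : ℝ → ℝ} {a b : ℝ} {C : ℝ≥0}
    (hh : IntervalIntegrable h volume a b) (hC : ∀ x ∈ uIcc a b, |h x| ≤ C) :
    LipschitzOnWith C (fun x => ∫ u in a..x, h u) (uIcc a b) := by
  refine LipschitzOnWith.of_dist_le_mul fun x hx y hy => ?_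
  rw [Real.dist_eq, intervalIntegral.integral_interval_sub_left
    (hh.mono_set (uIcc_subset_uIcc_left hx)) (hh.mono_set (uIcc_subset_uIcc_left hy)),
    Real.dist_eq, ← Real.norm_eq_abs]
  exact intervalIntegral.norm_integral_le_of_norm_le_const fun u hu =>
    hC u (uIcc_subset_uIcc hy hx (uIoc_subset_uIcc hu))

lemma lipschitzOnWith_exp_Iic_zero : LipschitzOnWith 1 Real.exp (Iic 0) :=
  (convex_Iic 0).lipschitzOnWith_of_nnnorm_deriv_le
    (fun x _ => Real.differentiableAt_exp) fun x hx => by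
      rw [Real.deriv_exp, ← NNReal.coe_le_coe, coe_nnnorm, Real.norm_eq_abs,
        abs_of_pos (Real.exp_pos x), NNReal.coe_one]
      exact Real.exp_le_one_iff.2 hx

lemma intervalIntegrable_of_nonneg_of_le {h : ℝ → ℝ} {C : ℝ} (hh : Measurable h)
    (h0 : ∀ x, 0 ≤ h x) (hC : ∀ x, h x ≤ C) (a b : ℝ) : IntervalIntegrable h volume a b :=
  (intervalIntegrable_const (c := C)).mono_fun hh.aestronglyMeasurable
    (ae_of_all _ fun x => by
      simp only [Real.norm_eq_abs, abs_of_nonneg (h0 x)]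
      exact (hC x).trans (le_abs_self C))

theorem integral_mul_exp_neg_integral {h : ℝ → ℝ} {a b C : ℝ} (hab : a ≤ b)
    (hh : IntervalIntegrable h volume a b) (h0 : ∀ x ∈ Icc a b, 0 ≤ h x)
    (hC : ∀ x ∈ Icc a b, h x ≤ C) :
    ∫ s in a..b, h s * Real.exp (-∫ u in a..s, h u) = 1 - Real.exp (-∫ u in a..b, h u) := by
  set F : ℝ → ℝ := fun x => ∫ u in a..x, h u
  have hF : LipschitzOnWith C.toNNReal F (uIcc a b) :=
    lipschitzOnWith_intervalIntegral hh fun x hx => by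
      rw [uIcc_of_le hab] at hx
      exact (abs_of_nonneg (h0 x hx)).trans_le ((hC x hx).trans (Real.le_coe_toNNReal C))
  have hF0 : MapsTo (fun x => -F x) (uIcc a b) (Iic 0) := fun x hx => by
    rw [uIcc_of_le hab] at hx
    exact neg_nonpos.2 (intervalIntegral.integral_nonneg hx.1 fun u hu =>
      h0 u ⟨hu.1, hu.2.trans hx.2⟩)
  have hG : AbsolutelyContinuousOnInterval (fun x => Real.exp (-F x)) a b :=
    (lipschitzOnWith_exp_Iic_zero.comp hF.neg hF0).absolutelyContinuousOnInterval
  have hderiv : ∀ᵐ x, x ∈ uIoc a b →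
      deriv (fun x => Real.exp (-F x)) x = -(h x * Real.exp (-F x)) := by
    filter_upwards [hh.ae_hasDerivAt_integral] with x hx hxab
    have hFx : HasDerivAt F (h x) x := hx (uIoc_subset_uIcc hxab) a left_mem_uIcc
    rw [(hFx.fun_neg.exp).deriv]
    ring
  have hFTC := hG.integral_deriv_eq_sub
  rw [intervalIntegral.integral_congr_ae hderiv, intervalIntegral.integral_neg] at hFTC
  simp only [F, intervalIntegral.integral_same, neg_zero, Real.exp_zero] at hFTC
  linarith

theorem lintegral_Ioi_mul_exp_neg_integral_eq_one {h : ℝ → ℝ} {a C : ℝ} (hh : Measurable h)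
    (h0 : ∀ x, 0 ≤ h x) (hC : ∀ x, h x ≤ C)
    (hdiv : Tendsto (fun b => ∫ u in a..b, h u) atTop atTop) :
    ∫⁻ s in Ioi a, ENNReal.ofReal (h s * Real.exp (-∫ u in a..s, h u)) = 1 := by
  have hii := intervalIntegrable_of_nonneg_of_le hh h0 hC
  have hF : Continuous fun s => Real.exp (-∫ u in a..s, h u) :=
    (intervalIntegral.continuous_primitive hii a).neg.rexp
  have hlim := (aecover_Iic (μ := volume.restrict (Ioi a)) tendsto_id)
    |>.lintegral_tendsto_of_countably_generated
    (ENNReal.measurable_ofReal.comp (hh.mul hF.measurable)).aemeasurable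
  refine tendsto_nhds_unique hlim ?_
  have hpartial : ∀ b, a ≤ b → ∫⁻ s in Iic b, ENNReal.ofReal (h s * Real.exp (-∫ u in a..s, h u))
      ∂volume.restrict (Ioi a) = ENNReal.ofReal (1 - Real.exp (-∫ u in a..b, h u)) := by
    intro b hab
    rw [Measure.restrict_restrict measurableSet_Iic, Iic_inter_Ioi,
      ← integral_mul_exp_neg_integral hab (hii a b) (fun x _ => h0 x) (fun x _ => hC x),
      intervalIntegral.integral_of_le hab, ofReal_integral_eq_lintegral_ofReal]
    · exact ((intervalIntegrable_iff_integrableOn_Ioc_of_le hab).1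
        ((hii a b).mul_continuousOn hF.continuousOn))
    · exact ae_of_all _ fun s => mul_nonneg (h0 s) (Real.exp_pos _).le
  have hexp : Tendsto (fun b => ENNReal.ofReal (1 - Real.exp (-∫ u in a..b, h u))) atTop (𝓝 1) := by
    have := (Real.tendsto_exp_atBot.comp (tendsto_neg_atTop_atBot.comp hdiv)).const_sub 1
    simpa [Function.comp_def] using (ENNReal.continuous_ofReal.tendsto _).comp this
  exact hexp.congr' ((eventually_ge_atTop a).mono fun b hab => (hpartial b hab).symm)

lemma lintegral_expMeasure_eq_setLIntegral (r : ℝ) {g : ℝ → ℝ≥0∞} (hg : Measurable g) :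
    ∫⁻ y, g y ∂expMeasure r = ∫⁻ y in Ioi 0, ENNReal.ofReal (r * Real.exp (-(r * y))) * g y := by
  have hexp : expMeasure r = volume.withDensity (exponentialPDF r) := rfl
  have hpdf : Measurable (exponentialPDF r) := (measurable_exponentialPDFReal r).ennreal_ofReal
  rw [hexp, lintegral_withDensity_eq_lintegral_mul _ hpdf hg,
    ← setLIntegral_eq_of_support_subset (s := Ici 0), ← setLIntegral_congr Ioi_ae_eq_Ici]
  · exact setLIntegral_congr_fun measurableSet_Ioi fun y (hy : 0 < y) => by
      rw [Pi.mul_apply, exponentialPDF_of_nonneg hy.le]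
  · intro y hy
    by_contra hneg
    exact hy (by rw [Pi.mul_apply, exponentialPDF_of_neg (not_le.1 hneg), zero_mul])

lemma lintegral_exp_neg_expMeasure {r : ℝ} (hr : 0 < r) :
    ∫⁻ y, ENNReal.ofReal (Real.exp (-y)) ∂expMeasure r = ENNReal.ofReal (r / (r + 1)) := by
  have : IsProbabilityMeasure (expMeasure (r + 1)) := isProbabilityMeasure_expMeasure (by linarith)
  rw [lintegral_expMeasure_eq_setLIntegral r (by fun_prop),
    ← mul_one (ENNReal.ofReal (r / (r + 1))), ← measure_univ (μ := expMeasure (r + 1)),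
    ← lintegral_one, lintegral_expMeasure_eq_setLIntegral (r + 1) measurable_const,
    ← lintegral_const_mul _ (by fun_prop)]
  refine setLIntegral_congr_fun measurableSet_Ioi fun y _ => ?_
  rw [← ENNReal.ofReal_mul (by positivity), mul_one, ← ENNReal.ofReal_mul (by positivity)]
  congr 1
  rw [mul_assoc, ← Real.exp_add]
  field_simp
  ring_nf

noncomputable def tailDeficit (f : ℝ → ℝ) (t : ℝ) : ℝ≥0∞ := ∫⁻ u in Ioi t, ENNReal.ofReal (1 - f u)

noncomputable def pgflTail (r : ℝ) (f : ℝ → ℝ) (t : ℝ) : ℝ :=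
  Real.exp (-(r * (tailDeficit f t).toReal))

section Tail

variable {f : ℝ → ℝ}

lemma antitone_tailDeficit : Antitone (tailDeficit f) := fun _ _ hts =>
  lintegral_mono_set (Ioi_subset_Ioi hts)

lemma tailDeficit_ne_top_of_le {t s : ℝ} (hts : t ≤ s) (ht : tailDeficit f t ≠ ⊤) :
    tailDeficit f s ≠ ⊤ :=
  ne_top_of_le_ne_top ht (antitone_tailDeficit hts)

@[fun_prop]
lemma measurable_pgflTail (r : ℝ) : Measurable (pgflTail r f) :=
  ((antitone_tailDeficit.measurable.ennreal_toReal).const_mul r).neg.exp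

lemma pgflTail_le_one {r : ℝ} (hr : 0 ≤ r) (t : ℝ) : pgflTail r f t ≤ 1 :=
  Real.exp_le_one_iff.2 (neg_nonpos.2 (mul_nonneg hr ENNReal.toReal_nonneg))

lemma tendsto_tailDeficit_atTop {t : ℝ} (ht : tailDeficit f t ≠ ⊤) :
    Tendsto (tailDeficit f) atTop (𝓝 0) := by
  set ν := volume.withDensity fun u => ENNReal.ofReal (1 - f u)
  have hν : ∀ s, tailDeficit f s = ν (Ioi s) := fun s =>
    (withDensity_apply _ measurableSet_Ioi).symm
  have hempty : (⋂ s : ℝ, Ioi s) = ∅ :=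
    eq_empty_of_forall_notMem fun x hx => lt_irrefl x (mem_iInter.1 hx x)
  have := tendsto_measure_iInter_atTop (μ := ν) (fun s => measurableSet_Ioi.nullMeasurableSet)
    (fun _ _ h => Ioi_subset_Ioi h) ⟨t, by rwa [← hν]⟩
  rwa [hempty, measure_empty, show ν ∘ Ioi = tailDeficit f from funext fun s => (hν s).symm]
    at this

lemma tendsto_pgflTail_atTop (r : ℝ) {t : ℝ} (ht : tailDeficit f t ≠ ⊤) :
    Tendsto (pgflTail r f) atTop (𝓝 1) := by
  have := ((ENNReal.continuousAt_toReal ENNReal.zero_ne_top).tendsto.comp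
    (tendsto_tailDeficit_atTop ht)).const_mul r
  unfold pgflTail
  simpa [Function.comp_def] using (Real.continuous_exp.tendsto _).comp this.neg

lemma toReal_tailDeficit_eq_add (hf : Measurable f) (hf0 : ∀ x, 0 ≤ f x) (hf1 : ∀ x, f x ≤ 1)
    {t s : ℝ} (hts : t ≤ s) (ht : tailDeficit f t ≠ ⊤) :
    (tailDeficit f t).toReal = (s - t) - (∫ u in t..s, f u) + (tailDeficit f s).toReal := by
  have hii := intervalIntegrable_of_nonneg_of_le hf hf0 hf1 t s
  have hIoc : ∫⁻ u in Ioc t s, ENNReal.ofReal (1 - f u)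
      = ENNReal.ofReal ((s - t) - ∫ u in t..s, f u) := by
    rw [← ofReal_integral_eq_lintegral_ofReal, ← intervalIntegral.integral_of_le hts,
      intervalIntegral.integral_sub intervalIntegrable_const hii, intervalIntegral.integral_const,
      smul_eq_mul, mul_one]
    · exact (intervalIntegrable_iff_integrableOn_Ioc_of_le hts).1 (intervalIntegrable_const.sub hii)
    · exact ae_of_all _ fun u => sub_nonneg.2 (hf1 u)
  have hsplit : tailDeficit f t
      = (∫⁻ u in Ioc t s, ENNReal.ofReal (1 - f u)) + tailDeficit f s := by
    rw [tailDeficit, ← Ioc_union_Ioi_eq_Ioi hts,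
      lintegral_union measurableSet_Ioi (Ioc_disjoint_Ioi le_rfl), tailDeficit]
  have hle := intervalIntegral.integral_mono_on hts hii intervalIntegrable_const fun x _ => hf1 x
  rw [intervalIntegral.integral_const, smul_eq_mul, mul_one] at hle
  rw [hsplit, hIoc, ENNReal.toReal_add ENNReal.ofReal_ne_top (tailDeficit_ne_top_of_le hts ht),
    ENNReal.toReal_ofReal (by linarith)]

lemma exp_neg_mul_mul_pgflTail_add (hf : Measurable f) (hf0 : ∀ x, 0 ≤ f x)
    (hf1 : ∀ x, f x ≤ 1) (r : ℝ) {t y : ℝ} (hy : 0 ≤ y) (ht : tailDeficit f t ≠ ⊤) :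
    Real.exp (-(r * y)) * pgflTail r f (t + y)
      = pgflTail r f t * Real.exp (-(r * ∫ u in t..t + y, f u)) := by
  rw [pgflTail, pgflTail, toReal_tailDeficit_eq_add hf hf0 hf1 (le_add_of_nonneg_right hy) ht,
    ← Real.exp_add, ← Real.exp_add]
  ring_nf

lemma tendsto_integral_atTop_of_tailDeficit_ne_top (hf : Measurable f) (hf0 : ∀ x, 0 ≤ f x)
    (hf1 : ∀ x, f x ≤ 1)
    {t : ℝ} (ht : tailDeficit f t ≠ ⊤) :
    Tendsto (fun b => ∫ u in t..t + b, f u) atTop atTop := by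
  refine tendsto_atTop_mono' _ ((eventually_ge_atTop 0).mono fun b hb => ?_)
    (tendsto_atTop_add_const_right _ (-(tailDeficit f t).toReal) tendsto_id)
  have := toReal_tailDeficit_eq_add hf hf0 hf1 (le_add_of_nonneg_right hb) ht
  have : 0 ≤ (tailDeficit f (t + b)).toReal := ENNReal.toReal_nonneg
  simp only [id]
  linarith

theorem lintegral_expMeasure_pgflTail (hf : Measurable f) (hf0 : ∀ x, 0 ≤ f x)
    (hf1 : ∀ x, f x ≤ 1) {r : ℝ} (hr : 0 < r) {t : ℝ} (ht : tailDeficit f t ≠ ⊤) :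
    ∫⁻ y, ENNReal.ofReal (f (t + y)) * ENNReal.ofReal (pgflTail r f (t + y)) ∂expMeasure r
      = ENNReal.ofReal (pgflTail r f t) := by
  set h : ℝ → ℝ := fun u => r * f (t + u)
  have hI : ∀ y, ∫ u in (0:ℝ)..y, h u = r * ∫ u in t..t + y, f u := fun y => by
    rw [intervalIntegral.integral_const_mul, intervalIntegral.integral_comp_add_left, add_zero]
  have hhm : Measurable h := (hf.comp (measurable_const_add t)).const_mul r
  have hh0 : ∀ u, 0 ≤ h u := fun u => mul_nonneg hr.le (hf0 _)
  have hhr : ∀ u, h u ≤ r := fun u => mul_le_of_le_one_right hr.le (hf1 _)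
  have hdiv : Tendsto (fun b => ∫ u in (0:ℝ)..b, h u) atTop atTop := by
    simpa only [hI] using
      (tendsto_integral_atTop_of_tailDeficit_ne_top hf hf0 hf1 ht).const_mul_atTop hr
  rw [lintegral_expMeasure_eq_setLIntegral r (by fun_prop)]
  calc ∫⁻ y in Ioi 0, ENNReal.ofReal (r * Real.exp (-(r * y)))
        * (ENNReal.ofReal (f (t + y)) * ENNReal.ofReal (pgflTail r f (t + y)))
      = ∫⁻ y in Ioi 0, ENNReal.ofReal (pgflTail r f t)
          * ENNReal.ofReal (h y * Real.exp (-∫ u in (0:ℝ)..y, h u)) := by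
        refine setLIntegral_congr_fun measurableSet_Ioi fun y (hy : 0 < y) => ?_
        have hpgfl := exp_neg_mul_mul_pgflTail_add hf hf0 hf1 r hy.le ht
        rw [← ENNReal.ofReal_mul (hf0 _), ← ENNReal.ofReal_mul (by positivity),
          ← ENNReal.ofReal_mul (show 0 ≤ pgflTail r f t from (Real.exp_pos _).le), hI]
        congr 1
        linear_combination r * f (t + y) * hpgfl
    _ = ENNReal.ofReal (pgflTail r f t) := by
        have hm : Measurable fun y => ENNReal.ofReal (h y * Real.exp (-∫ u in (0:ℝ)..y, h u)) :=
          (hhm.mul (intervalIntegral.continuous_primitive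
            (intervalIntegrable_of_nonneg_of_le hhm hh0 hhr) 0).neg.rexp.measurable).ennreal_ofReal
        rw [lintegral_const_mul _ hm, lintegral_Ioi_mul_exp_neg_integral_eq_one hhm hh0 hhr hdiv,
          mul_one]

end Tail

lemma tendsto_ofReal_exp_neg_mul_toReal {r : ℝ} (hr : 0 < r) {x : ℕ → ℝ≥0∞}
    (hx : ∀ m, x m ≠ ⊤) (hlim : Tendsto x atTop (𝓝 ⊤)) :
    Tendsto (fun m => ENNReal.ofReal (Real.exp (-(r * (x m).toReal)))) atTop (𝓝 0) := by
  have hreal : Tendsto (fun m => (x m).toReal) atTop atTop := tendsto_atTop.2 fun K =>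
    (hlim.eventually (lt_mem_nhds ENNReal.ofReal_lt_top)).mono fun m hm =>
      (ENNReal.ofReal_le_iff_le_toReal (hx m)).1 hm.le
  simpa [Function.comp_def] using (ENNReal.continuous_ofReal.tendsto 0).comp
    (Real.tendsto_exp_atBot.comp (tendsto_neg_atTop_atBot.comp (hreal.const_mul_atTop hr)))

section RandomWalk

variable {Ω : Type*} {mΩ : MeasurableSpace Ω} {μ : Measure Ω}

lemma ProbabilityTheory.IndepFun.lintegral_comp_prodMk [IsFiniteMeasure μ] {α β : Type*}
    [MeasurableSpace α] [MeasurableSpace β] {X : Ω → α} {Y : Ω → β} (hX : Measurable X)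
    (hY : Measurable Y) (hXY : IndepFun X Y μ) {Θ : α × β → ℝ≥0∞} (hΘ : Measurable Θ) :
    ∫⁻ ω, Θ (X ω, Y ω) ∂μ = ∫⁻ ω, ∫⁻ y, Θ (X ω, y) ∂(μ.map Y) ∂μ := by
  rw [← lintegral_map hΘ (hX.prodMk hY),
    (indepFun_iff_map_prod_eq_prod_map_map hX.aemeasurable hY.aemeasurable).1 hXY,
    lintegral_prod _ hΘ.aemeasurable, lintegral_map hΘ.lintegral_prod_right' hX]

lemma ProbabilityTheory.iIndepFun.indepFun_of_measurable_past {β γ : Type*}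
    [mβ : MeasurableSpace β] [MeasurableSpace γ] {E : ℕ → Ω → β} (hEm : ∀ i, Measurable (E i))
    (hE : iIndepFun E μ) (n : ℕ) {X : Ω → γ}
    (hX : Measurable[⨆ i ∈ Finset.range n, mβ.comap (E i)] X) :
    IndepFun X (E n) μ := by
  have hpast := indep_iSup_of_disjoint (fun i => (hEm i).comap_le)
    ((iIndepFun_iff_iIndep _ _ _).1 hE) (S := (Finset.range n : Set ℕ)) (T := {n}) (by simp)
  rw [IndepFun_iff_Indep]
  refine indep_of_indep_of_le_right (indep_of_indep_of_le_left hpast ?_) ?_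
  · simpa using hX.comap_le
  · exact le_iSup₂ (f := fun i (_ : i ∈ ({n} : Set ℕ)) => mβ.comap (E i)) n rfl

theorem lintegral_prod_mul_eq_of_harmonic [IsProbabilityMeasure μ] {ν : Measure ℝ}
    {E : ℕ → Ω → ℝ} (hEm : ∀ i, Measurable (E i)) (hE0 : ∀ i ω, 0 ≤ E i ω)
    (hindep : iIndepFun E μ) (hlaw : ∀ i, μ.map (E i) = ν) {ψ φ : ℝ → ℝ≥0∞}
    (hψ : Measurable ψ) (hφ : Measurable φ)
    (hharm : ∀ t, 0 ≤ t → ∫⁻ y, ψ (t + y) * φ (t + y) ∂ν = φ t) (n : ℕ) :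
    ∫⁻ ω, (∏ k ∈ Finset.range n, ψ (∑ i ∈ Finset.range (k + 1), E i ω))
      * φ (∑ i ∈ Finset.range n, E i ω) ∂μ = φ 0 := by
  induction n with
  | zero => simp
  | succ n ih =>
    set past := ⨆ i ∈ Finset.range n, MeasurableSpace.comap (E i) inferInstance
    have hpast : ∀ i < n, Measurable[past] (E i) := fun i hi =>
      (comap_measurable (E i)).mono (le_iSup₂ (f := fun i (_ : i ∈ Finset.range n) =>
        MeasurableSpace.comap (E i) inferInstance) i (Finset.mem_range.2 hi)) le_rfl
    set S : Ω → ℝ := fun ω => ∑ i ∈ Finset.range n, E i ω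
    set P : Ω → ℝ≥0∞ := fun ω => ∏ k ∈ Finset.range n, ψ (∑ i ∈ Finset.range (k + 1), E i ω)
    have hPS : Measurable[past] fun ω => (P ω, S ω) := by
      refine Measurable.prodMk (Finset.measurable_prod _ fun k hk => hψ.comp
        (Finset.measurable_sum _ fun i hi => hpast i ?_))
        (Finset.measurable_sum _ fun i hi => hpast i (Finset.mem_range.1 hi))
      have := Finset.mem_range.1 hi; have := Finset.mem_range.1 hk; omega
    have hΘ : Measurable fun q : (ℝ≥0∞ × ℝ) × ℝ =>
        q.1.1 * (ψ (q.1.2 + q.2) * φ (q.1.2 + q.2)) := by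
      fun_prop
    calc ∫⁻ ω, (∏ k ∈ Finset.range (n + 1), ψ (∑ i ∈ Finset.range (k + 1), E i ω))
          * φ (∑ i ∈ Finset.range (n + 1), E i ω) ∂μ
        = ∫⁻ ω, P ω * (ψ (S ω + E n ω) * φ (S ω + E n ω)) ∂μ := by
          simp only [Finset.prod_range_succ, Finset.sum_range_succ, P, S, mul_assoc]
      _ = ∫⁻ ω, ∫⁻ y, P ω * (ψ (S ω + y) * φ (S ω + y)) ∂ν ∂μ := by
          rw [← hlaw n]
          exact IndepFun.lintegral_comp_prodMk
            (hPS.mono (iSup₂_le fun i _ => (hEm i).comap_le) le_rfl)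
            (hEm n) (hindep.indepFun_of_measurable_past hEm n hPS) hΘ
      _ = ∫⁻ ω, P ω * φ (S ω) ∂μ := by
          refine lintegral_congr fun ω => ?_
          rw [lintegral_const_mul _ (by fun_prop),
            hharm _ (Finset.sum_nonneg fun i _ => hE0 i ω)]
      _ = φ 0 := ih

lemma exists_measurable_nonneg_ae_eq {r : ℝ} (hr : 0 < r) {E : ℕ → Ω → ℝ}
    (hlaw : ∀ i, μ.map (E i) = expMeasure r) :
    ∃ E' : ℕ → Ω → ℝ, (∀ i, Measurable (E' i)) ∧ (∀ i ω, 0 ≤ E' i ω) ∧ ∀ i, E i =ᵐ[μ] E' i := by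
  have : IsProbabilityMeasure (expMeasure r) := isProbabilityMeasure_expMeasure hr
  have hae : ∀ i, AEMeasurable (E i) μ := fun i => by
    by_contra h
    exact IsProbabilityMeasure.ne_zero (expMeasure r) (hlaw i ▸ Measure.map_of_not_aemeasurable h)
  have hexp : ∀ᵐ y ∂expMeasure r, 0 ≤ y := by
    simp only [ae_iff, not_le]
    exact (withDensity_apply _ measurableSet_Iio).trans (lintegral_exponentialPDF_of_nonpos le_rfl)
  refine ⟨fun i ω => max ((hae i).mk _ ω) 0, fun i => (hae i).measurable_mk.max measurable_const,
    fun i ω => le_max_right _ _, fun i => ?_⟩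
  filter_upwards [(hae i).ae_eq_mk, ae_of_ae_map (hae i) ((hlaw i).symm ▸ hexp)] with ω h h0
  rw [← h, max_eq_left h0]

theorem ae_tendsto_sum_atTop_of_expMeasure {r : ℝ} (hr : 0 < r) {E : ℕ → Ω → ℝ}
    (hEm : ∀ i, Measurable (E i))
    (hE0 : ∀ i ω, 0 ≤ E i ω) (hindep : iIndepFun E μ) (hlaw : ∀ i, μ.map (E i) = expMeasure r) :
    ∀ᵐ ω ∂μ, Tendsto (fun n => ∑ i ∈ Finset.range n, E i ω) atTop atTop := by
  set c := ENNReal.ofReal (r / (r + 1)) with hc_def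
  have hc : c < 1 := by
    rw [← ENNReal.ofReal_one]
    exact (ENNReal.ofReal_lt_ofReal_iff one_pos).2 ((div_lt_one (by linarith)).2 (by linarith))
  set G : ℕ → Ω → ℝ≥0∞ := fun i ω => ENNReal.ofReal (Real.exp (-E i ω))
  have hG : ∀ n ω, ENNReal.ofReal (Real.exp (-∑ i ∈ Finset.range n, E i ω))
      = ∏ i ∈ Finset.range n, G i ω := fun n ω => by
    rw [← Finset.sum_neg_distrib, Real.exp_sum,
      ENNReal.ofReal_prod_of_nonneg fun i _ => (Real.exp_pos _).le]
  have hmoment : ∀ n, ∫⁻ ω, ENNReal.ofReal (Real.exp (-∑ i ∈ Finset.range n, E i ω)) ∂μ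
      = c ^ n := by
    intro n
    have hGi : ∀ i, ∫⁻ ω, G i ω ∂μ = c := fun i => by
      rw [hc_def, ← lintegral_exp_neg_expMeasure hr, ← hlaw i, lintegral_map (by fun_prop) (hEm i)]
    have hGind : iIndepFun G μ :=
      hindep.comp (fun _ x => ENNReal.ofReal (Real.exp (-x))) fun _ => by fun_prop
    simp only [hG]
    rw [lintegral_prod_eq_prod_lintegral_of_indepFun _ G hGind fun i => by fun_prop]
    simp [hGi]
  have hinf : ∀ᵐ ω ∂μ, ⨅ n, ENNReal.ofReal (Real.exp (-∑ i ∈ Finset.range n, E i ω)) = 0 := by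
    refine (lintegral_eq_zero_iff (by fun_prop)).1 (le_antisymm ?_ bot_le)
    exact ge_of_tendsto' (ENNReal.tendsto_pow_atTop_nhds_zero_of_lt_one hc) fun n =>
      (lintegral_mono fun ω => iInf_le _ n).trans (hmoment n).le
  filter_upwards [hinf] with ω hω
  refine tendsto_atTop_atTop_of_monotone (fun m n hmn => Finset.sum_le_sum_of_subset_of_nonneg
    (Finset.range_subset_range.2 hmn) fun i _ _ => hE0 i ω) fun M => ?_
  obtain ⟨n, hn⟩ := iInf_lt_iff.1 (hω.symm ▸ ENNReal.ofReal_pos.2 (Real.exp_pos (-M)))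
  exact ⟨n, by linarith [Real.exp_lt_exp.1 ((ENNReal.ofReal_lt_ofReal_iff (Real.exp_pos _)).1 hn)]⟩

variable [IsProbabilityMeasure μ] {r : ℝ} {E : ℕ → Ω → ℝ} {f : ℝ → ℝ}

lemma tendsto_lintegral_one_sub_pgflTail (hr : 0 < r) (hEm : ∀ i, Measurable (E i))
    (hE0 : ∀ i ω, 0 ≤ E i ω) (hindep : iIndepFun E μ) (hlaw : ∀ i, μ.map (E i) = expMeasure r)
    (hfin : tailDeficit f 0 ≠ ⊤) :
    Tendsto (fun n => ∫⁻ ω, 1 - ENNReal.ofReal (pgflTail r f (∑ i ∈ Finset.range n, E i ω)) ∂μ)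
      atTop (𝓝 0) := by
  have hφ : Continuous fun x : ℝ => 1 - ENNReal.ofReal x :=
    (ENNReal.continuous_sub_left ENNReal.one_ne_top).comp ENNReal.continuous_ofReal
  have := tendsto_lintegral_of_dominated_convergence (μ := μ) (f := 0)
    (F := fun n ω => 1 - ENNReal.ofReal (pgflTail r f (∑ i ∈ Finset.range n, E i ω)))
    1 (fun n => hφ.measurable.comp (by fun_prop)) (fun n => ae_of_all _ fun ω => tsub_le_self)
    (by simp) ?_
  · simpa using this
  filter_upwards [ae_tendsto_sum_atTop_of_expMeasure hr hEm hE0 hindep hlaw] with ω hω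
  simpa [Function.comp_def] using (hφ.tendsto 1).comp ((tendsto_pgflTail_atTop r hfin).comp hω)

theorem tendsto_lintegral_prod_pgflTail (hr : 0 < r) (hEm : ∀ i, Measurable (E i))
    (hE0 : ∀ i ω, 0 ≤ E i ω) (hindep : iIndepFun E μ) (hlaw : ∀ i, μ.map (E i) = expMeasure r)
    (hf : Measurable f) (hf0 : ∀ x, 0 ≤ f x) (hf1 : ∀ x, f x ≤ 1) (hfin : tailDeficit f 0 ≠ ⊤) :
    Tendsto (fun n => ∫⁻ ω, ∏ k ∈ Finset.range n,
        ENNReal.ofReal (f (∑ i ∈ Finset.range (k + 1), E i ω)) ∂μ)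
      atTop (𝓝 (ENNReal.ofReal (pgflTail r f 0))) := by
  set S : ℕ → Ω → ℝ := fun n ω => ∑ i ∈ Finset.range n, E i ω
  set P : ℕ → Ω → ℝ≥0∞ := fun n ω => ∏ k ∈ Finset.range n, ENNReal.ofReal (f (S (k + 1) ω))
  set φ : ℝ → ℝ≥0∞ := fun t => ENNReal.ofReal (pgflTail r f t)
  have hφ1 : ∀ t, φ t ≤ 1 := fun t => ENNReal.ofReal_le_one.2 (pgflTail_le_one hr.le t)
  have hmart : ∀ n, ∫⁻ ω, P n ω * φ (S n ω) ∂μ = φ 0 :=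
    lintegral_prod_mul_eq_of_harmonic hEm hE0 hindep hlaw hf.ennreal_ofReal
      (measurable_pgflTail r).ennreal_ofReal fun t ht =>
        lintegral_expMeasure_pgflTail hf hf0 hf1 hr (tailDeficit_ne_top_of_le ht hfin)
  have hlower : ∀ n, φ 0 ≤ ∫⁻ ω, P n ω ∂μ := fun n =>
    (hmart n).symm.le.trans (lintegral_mono fun ω => mul_le_of_le_one_right' (hφ1 _))
  have hupper : ∀ n, ∫⁻ ω, P n ω ∂μ ≤ φ 0 + ∫⁻ ω, 1 - φ (S n ω) ∂μ := fun n => by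
    rw [← hmart n, ← lintegral_add_left (by fun_prop)]
    refine lintegral_mono fun ω => ?_
    calc P n ω = P n ω * φ (S n ω) + P n ω * (1 - φ (S n ω)) := by
          rw [← mul_add, add_tsub_cancel_of_le (hφ1 _), mul_one]
      _ ≤ P n ω * φ (S n ω) + (1 - φ (S n ω)) := by
          gcongr
          exact mul_le_of_le_one_left' (Finset.prod_le_one' fun k _ =>
            ENNReal.ofReal_le_one.2 (hf1 _))
  exact tendsto_of_tendsto_of_tendsto_of_le_of_le tendsto_const_nhds
    (by simpa using
      (tendsto_lintegral_one_sub_pgflTail hr hEm hE0 hindep hlaw hfin).const_add (φ 0))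
    hlower hupper

theorem lintegral_iInf_prod_eq_pgflTail (hr : 0 < r) (hEm : ∀ i, Measurable (E i))
    (hE0 : ∀ i ω, 0 ≤ E i ω) (hindep : iIndepFun E μ) (hlaw : ∀ i, μ.map (E i) = expMeasure r)
    (hf : Measurable f) (hf0 : ∀ x, 0 ≤ f x) (hf1 : ∀ x, f x ≤ 1) (hfin : tailDeficit f 0 ≠ ⊤) :
    ∫⁻ ω, ⨅ n, ∏ k ∈ Finset.range n, ENNReal.ofReal (f (∑ i ∈ Finset.range (k + 1), E i ω)) ∂μ
      = ENNReal.ofReal (pgflTail r f 0) := by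
  have hanti : Antitone fun n ω =>
      ∏ k ∈ Finset.range n, ENNReal.ofReal (f (∑ i ∈ Finset.range (k + 1), E i ω)) :=
    antitone_nat_of_succ_le fun n ω => by
      rw [Finset.prod_range_succ]
      exact mul_le_of_le_one_right' (ENNReal.ofReal_le_one.2 (hf1 _))
  rw [lintegral_iInf (fun n => by fun_prop) hanti (by simp)]
  exact tendsto_nhds_unique (tendsto_atTop_iInf fun m n hmn => lintegral_mono (hanti hmn))
    (tendsto_lintegral_prod_pgflTail hr hEm hE0 hindep hlaw hf hf0 hf1 hfin)

theorem lintegral_iInf_prod_eq_zero (hr : 0 < r) (hEm : ∀ i, Measurable (E i))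
    (hE0 : ∀ i ω, 0 ≤ E i ω) (hindep : iIndepFun E μ) (hlaw : ∀ i, μ.map (E i) = expMeasure r)
    (hf : Measurable f) (hf0 : ∀ x, 0 ≤ f x) (hf1 : ∀ x, f x ≤ 1) (hinf : tailDeficit f 0 = ⊤) :
    ∫⁻ ω, ⨅ n, ∏ k ∈ Finset.range n, ENNReal.ofReal (f (∑ i ∈ Finset.range (k + 1), E i ω)) ∂μ
      = 0 := by
  set F : ℝ → ℝ≥0∞ := fun u => ENNReal.ofReal (1 - f u)
  set fm : ℕ → ℝ → ℝ := fun m => (Iic (m : ℝ)).piecewise f 1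
  have hfm : ∀ m, tailDeficit (fm m) 0 = ∫⁻ u in Iic (m : ℝ), F u ∂volume.restrict (Ioi 0) := by
    intro m
    rw [← lintegral_indicator measurableSet_Iic, tailDeficit]
    refine lintegral_congr fun u => ?_
    by_cases hu : u ≤ m <;> simp [fm, F, hu]
  have hfm_fin : ∀ m, tailDeficit (fm m) 0 ≠ ⊤ := fun m => by
    rw [hfm, Measure.restrict_restrict measurableSet_Iic, Iic_inter_Ioi]
    refine ne_top_of_le_ne_top ?_ (setLIntegral_mono' measurableSet_Ioc (g := fun _ => 1)
      fun u _ => ENNReal.ofReal_le_one.2 (by linarith [hf0 u]))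
    simp
  have hlim : Tendsto (fun m : ℕ => tailDeficit (fm m) 0) atTop (𝓝 ⊤) := by
    simp only [hfm]
    rw [← hinf]
    exact (aecover_Iic tendsto_natCast_atTop_atTop).lintegral_tendsto_of_countably_generated
      (by fun_prop)
  refine le_antisymm (ge_of_tendsto' (tendsto_ofReal_exp_neg_mul_toReal hr hfm_fin hlim)
    fun m => ?_) bot_le
  have hfm0 : ∀ x, 0 ≤ fm m x := fun x => by by_cases hx : x ≤ m <;> simp [fm, hx, hf0]
  have hfm1 : ∀ x, fm m x ≤ 1 := fun x => by by_cases hx : x ≤ m <;> simp [fm, hx, hf1]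
  rw [← pgflTail, ← lintegral_iInf_prod_eq_pgflTail (f := fm m) hr hEm hE0 hindep hlaw
    (hf.piecewise measurableSet_Iic measurable_const) hfm0 hfm1 (hfm_fin m)]
  refine lintegral_mono fun ω => iInf_mono fun n => Finset.prod_le_prod' fun k _ =>
    ENNReal.ofReal_le_ofReal ?_
  by_cases h : ∑ i ∈ Finset.range (k + 1), E i ω ≤ m <;> simp [fm, h, hf1]

theorem lintegral_iInf_prod_eq (hr : 0 < r) (hEm : ∀ i, Measurable (E i))
    (hE0 : ∀ i ω, 0 ≤ E i ω) (hindep : iIndepFun E μ) (hlaw : ∀ i, μ.map (E i) = expMeasure r)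
    (hf : Measurable f) (hf0 : ∀ x, 0 ≤ x → 0 ≤ f x) (hf1 : ∀ x, 0 ≤ x → f x ≤ 1) :
    ∫⁻ ω, ⨅ n, ∏ k ∈ Finset.range n, ENNReal.ofReal (f (∑ i ∈ Finset.range (k + 1), E i ω)) ∂μ
      = if tailDeficit f 0 = ⊤ then 0 else ENNReal.ofReal (pgflTail r f 0) := by
  set g : ℝ → ℝ := fun x => max 0 (min (f x) 1)
  have hgf : ∀ x, 0 ≤ x → g x = f x := fun x hx => by
    simp only [g, min_eq_left (hf1 x hx), max_eq_right (hf0 x hx)]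
  have hg : Measurable g := measurable_const.max (hf.min measurable_const)
  have hg0 : ∀ x, 0 ≤ g x := fun x => le_max_left _ _
  have hg1 : ∀ x, g x ≤ 1 := fun x => max_le zero_le_one (min_le_right _ _)
  have hdeficit : tailDeficit g 0 = tailDeficit f 0 :=
    setLIntegral_congr_fun measurableSet_Ioi fun x hx => by rw [hgf x (le_of_lt hx)]
  have hpgfl : pgflTail r g 0 = pgflTail r f 0 := by rw [pgflTail, pgflTail, hdeficit]
  simp_rw [← hgf _ (Finset.sum_nonneg fun i _ => hE0 i _), ← hdeficit, ← hpgfl]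
  split_ifs with hinf
  · exact lintegral_iInf_prod_eq_zero hr hEm hE0 hindep hlaw hg hg0 hg1 hinf
  · exact lintegral_iInf_prod_eq_pgflTail hr hEm hE0 hindep hlaw hg hg0 hg1 hinf

end RandomWalk

/-- Probability generating functional of the 1-D Poisson point process (Eq. (27)):
`E[∏_{k≥1} f(T_k)] = exp(-r ∫_0^∞ (1 - f(x)) dx)`, both sides valued in `[0,1] ⊆ ℝ≥0∞`,
with `exp(-∞)` read as `0`. -/
theorem pgfl_poisson_point_process
    {Ω : Type*} [MeasureSpace Ω] [IsProbabilityMeasure (ℙ : Measure Ω)]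
    (r : ℝ) (hr : 0 < r)
    (E : ℕ → Ω → ℝ)
    (hindep : iIndepFun E ℙ)
    (hE : ∀ k, Measure.map (E k) ℙ = expMeasure r)
    (T : ℕ → Ω → ℝ) (hT : ∀ k ω, T k ω = ∑ i ∈ Finset.range k, E i ω)
    (f : ℝ → ℝ) (hf : Measurable f)
    (hf0 : ∀ x, 0 ≤ x → 0 ≤ f x) (hf1 : ∀ x, 0 ≤ x → f x ≤ 1) :
    ∫⁻ ω, ⨅ n : ℕ, ∏ k ∈ Finset.range n, ENNReal.ofReal (f (T (k + 1) ω)) ∂ℙ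
      = if (∫⁻ x in Ioi (0 : ℝ), ENNReal.ofReal (1 - f x)) = ⊤ then 0
        else ENNReal.ofReal
          (Real.exp (-(r * (∫⁻ x in Ioi (0 : ℝ), ENNReal.ofReal (1 - f x)).toReal))) := by
  obtain ⟨E', hE'm, hE'0, hEE'⟩ := exists_measurable_nonneg_ae_eq hr hE
  have hlaw' : ∀ k, Measure.map (E' k) ℙ = expMeasure r := fun k =>
    (Measure.map_congr (hEE' k)).symm.trans (hE k)
  calc ∫⁻ ω, ⨅ n : ℕ, ∏ k ∈ Finset.range n, ENNReal.ofReal (f (T (k + 1) ω)) ∂ℙ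
      = ∫⁻ ω, ⨅ n, ∏ k ∈ Finset.range n,
          ENNReal.ofReal (f (∑ i ∈ Finset.range (k + 1), E' i ω)) ∂ℙ := by
        refine lintegral_congr_ae ?_
        filter_upwards [ae_all_iff.2 hEE'] with ω hω
        simp only [hT, hω]
    _ = _ := lintegral_iInf_prod_eq hr hE'm hE'0 (hindep.congr hEE') hlaw' hf hf0 hf1
end

section
/- (Campbell's formula.) Let r > 0, let (E_k)_{k≥1} be i.i.d. random variables with exponential distribution of rate r, and set T_k = E₁ + ⋯ + E_k. Then for every measurable function f : [0,∞) → [0,∞], E[ Σ_{k=1}^∞ f(T_k) ] = r · ∫_0^∞ f(x) dx, as an identity in [0,∞]. -/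
/-!
The partial sum `T (k + 1)` of `k + 1` independent `Exp(r)` variables has the Erlang law
`Γ(k + 1, r)`, with density `r ^ (k + 1) x ^ k e^{-r x} / k!` on `x ≥ 0`: convolving that density
with `r e^{-r x}` integrates `y ^ k` over `[0, x]` and so raises `k` by one. By monotone
convergence the left-hand side is the integral of `f` against `∑ₖ law (T (k + 1))`, and summing
the Erlang densities over `k` gives `r e^{-r x} ∑ₖ (r x) ^ k / k! = r` on `[0, ∞)`.
-/

open MeasureTheory ProbabilityTheory Set Real Nat
open scoped ENNReal

namespace ProbabilityTheory

lemma measurable_gammaPDF (a r : ℝ) : Measurable (gammaPDF a r) :=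
  (measurable_gammaPDFReal a r).ennreal_ofReal

lemma gammaPDFReal_natCast_add_one (k : ℕ) (r x : ℝ) :
    gammaPDFReal (k + 1) r x =
      if 0 ≤ x then r ^ (k + 1) / k ! * x ^ k * exp (-(r * x)) else 0 := by
  rw [gammaPDFReal, Gamma_nat_eq_factorial, add_sub_cancel_right, ← Nat.cast_add_one,
    Real.rpow_natCast, Real.rpow_natCast]

lemma gammaPDF_natCast_add_one_mul_exponentialPDF {r : ℝ} (hr : 0 ≤ r) (k : ℕ) (y z : ℝ) :
    gammaPDF (k + 1) r y * exponentialPDF r (z - y) =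
      (Icc 0 z).indicator
        (fun y ↦ ENNReal.ofReal (r ^ (k + 2) / k ! * exp (-(r * z)) * y ^ k)) y := by
  by_cases hy : 0 ≤ y
  · by_cases hyz : y ≤ z
    · rw [indicator_of_mem (show y ∈ Icc 0 z from ⟨hy, hyz⟩), gammaPDF,
        gammaPDFReal_natCast_add_one, if_pos hy, exponentialPDF_of_nonneg (sub_nonneg.2 hyz),
        ← ENNReal.ofReal_mul (by positivity)]
      congr 1
      have hexp : exp (-(r * y)) * exp (-(r * (z - y))) = exp (-(r * z)) := by
        rw [← exp_add]; ring_nf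
      linear_combination r ^ (k + 1) / k ! * y ^ k * r * hexp
    · rw [indicator_of_notMem (fun h ↦ hyz h.2), exponentialPDF_of_neg (by linarith), mul_zero]
  · rw [indicator_of_notMem (fun h ↦ hy h.1), gammaPDF_of_neg (not_le.1 hy), zero_mul]

lemma gammaPDF_natCast_add_one_lconvolution_exponentialPDF {r : ℝ} (hr : 0 ≤ r) (k : ℕ) :
    gammaPDF (k + 1) r ⋆ₗ exponentialPDF r = gammaPDF (k + 2) r := by
  ext z
  simp_rw [lconvolution_def, neg_add_eq_sub, gammaPDF_natCast_add_one_mul_exponentialPDF hr,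
    lintegral_indicator measurableSet_Icc]
  rcases lt_or_ge z 0 with hz | hz
  · rw [Icc_eq_empty (by linarith), Measure.restrict_empty, lintegral_zero_measure,
      gammaPDF_of_neg hz]
  rw [← ofReal_integral_eq_lintegral_ofReal, integral_Icc_eq_integral_Ioc,
    ← intervalIntegral.integral_of_le hz, intervalIntegral.integral_const_mul, integral_pow,
    show (k : ℝ) + 2 = (k + 1 : ℕ) + 1 by push_cast; ring, gammaPDF, gammaPDFReal_natCast_add_one,
    if_pos hz]
  · congr 1
    rw [Nat.factorial_succ]
    push_cast
    field_simp
    ring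
  · exact (continuous_const.mul (continuous_pow k)).integrableOn_Icc
  · filter_upwards [ae_restrict_mem measurableSet_Icc] with y hy
    have hy₀ : 0 ≤ y := hy.1
    positivity

lemma gammaMeasure_natCast_add_one_conv_expMeasure {r : ℝ} (hr : 0 ≤ r) (k : ℕ) :
    gammaMeasure (k + 1) r ∗ expMeasure r = gammaMeasure (k + 2) r := by
  change volume.withDensity _ ∗ volume.withDensity (exponentialPDF r) = volume.withDensity _
  rw [conv_withDensity_eq_lconvolution (g := exponentialPDF r) (measurable_gammaPDF _ _)
      (measurable_exponentialPDFReal r).ennreal_ofReal,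
    gammaPDF_natCast_add_one_lconvolution_exponentialPDF hr]

lemma iIndepFun.map_sum_range_eq_gammaMeasure {Ω : Type*} {_ : MeasurableSpace Ω}
    {μ : Measure Ω} [IsProbabilityMeasure μ] {r : ℝ} (hr : 0 < r) {E : ℕ → Ω → ℝ}
    (hindep : iIndepFun E μ) (hE : ∀ i, μ.map (E i) = expMeasure r) (k : ℕ) :
    μ.map (∑ i ∈ Finset.range (k + 1), E i) = gammaMeasure (k + 1) r := by
  have hmeas (i : ℕ) : AEMeasurable (E i) μ := by
    have := isProbabilityMeasure_expMeasure hr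
    exact .of_map_ne_zero (by rw [hE i]; exact IsProbabilityMeasure.ne_zero _)
  induction k with
  | zero => simpa [expMeasure] using hE 0
  | succ k ih =>
    rw [Finset.sum_range_succ, (hindep.indepFun_finsetSum_of_notMem₀ hmeas
        Finset.notMem_range_self).map_add_eq_map_conv_map₀
        (Finset.aemeasurable_sum _ fun i _ ↦ hmeas i) (hmeas _), ih, hE,
      gammaMeasure_natCast_add_one_conv_expMeasure hr.le]
    congr 1
    push_cast
    ring

lemma tsum_gammaPDF_natCast_add_one {r : ℝ} (hr : 0 ≤ r) (x : ℝ) :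
    ∑' k : ℕ, gammaPDF (k + 1) r x = (Ici 0).indicator (fun _ ↦ ENNReal.ofReal r) x := by
  rcases lt_or_ge x 0 with hx | hx
  · rw [indicator_of_notMem (show x ∉ Ici 0 from not_le.2 hx)]
    simp [gammaPDF_of_neg hx]
  have hterm (k : ℕ) : gammaPDFReal (k + 1) r x = r * exp (-(r * x)) * ((r * x) ^ k / k !) := by
    rw [gammaPDFReal_natCast_add_one, if_pos hx]
    ring
  have hexp : HasSum (fun k : ℕ ↦ (r * x) ^ k / k !) (exp (r * x)) := by
    rw [exp_eq_exp_ℝ]; exact NormedSpace.expSeries_div_hasSum_exp (r * x)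
  simp_rw [gammaPDF, hterm]
  rw [← ENNReal.ofReal_tsum_of_nonneg (fun k ↦ by positivity) (hexp.summable.mul_left _),
    tsum_mul_left, hexp.tsum_eq, mul_assoc, ← exp_add, neg_add_cancel, exp_zero, mul_one,
    indicator_of_mem (mem_Ici.2 hx)]

lemma sum_gammaMeasure_natCast_add_one {r : ℝ} (hr : 0 ≤ r) :
    Measure.sum (fun k : ℕ ↦ gammaMeasure (k + 1) r) =
      ENNReal.ofReal r • volume.restrict (Ioi 0) := by
  simp_rw [gammaMeasure]
  rw [← withDensity_tsum fun k ↦ measurable_gammaPDF _ _]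
  have hdensity : ∑' k : ℕ, gammaPDF (k + 1) r = (Ici 0).indicator fun _ ↦ ENNReal.ofReal r :=
    funext fun x ↦ by rw [ENNReal.tsum_apply, tsum_gammaPDF_natCast_add_one hr]
  rw [hdensity, withDensity_indicator measurableSet_Ici, withDensity_const,
    restrict_Ioi_eq_restrict_Ici]

end ProbabilityTheory

namespace MeasureTheory

lemma lintegral_tsum_comp_eq_lintegral_sum_map {α Ω ι : Type*} [Countable ι] [MeasurableSpace α]
    {_ : MeasurableSpace Ω} {μ : Measure Ω} {X : ι → Ω → α} (hX : ∀ i, AEMeasurable (X i) μ)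
    {f : α → ℝ≥0∞} (hf : Measurable f) :
    ∫⁻ ω, ∑' i, f (X i ω) ∂μ = ∫⁻ x, f x ∂(Measure.sum fun i ↦ μ.map (X i)) := by
  rw [lintegral_tsum (f := fun i ω ↦ f (X i ω)) fun i ↦ hf.comp_aemeasurable (hX i),
    lintegral_sum_measure]
  exact tsum_congr fun i ↦ (lintegral_map' hf.aemeasurable (hX i)).symm

end MeasureTheory

/-- Campbell's formula for the 1-D Poisson point process:
`E[∑_{k≥1} f(T_k)] = r ∫_0^∞ f(x) dx`, as an identity in `[0,∞]`. -/
theorem campbell_formula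
    {Ω : Type*} [MeasureSpace Ω] [IsProbabilityMeasure (ℙ : Measure Ω)]
    (r : ℝ) (hr : 0 < r)
    (E : ℕ → Ω → ℝ)
    (hindep : iIndepFun E ℙ)
    (hE : ∀ k, Measure.map (E k) ℙ = expMeasure r)
    (T : ℕ → Ω → ℝ) (hT : ∀ k ω, T k ω = ∑ i ∈ Finset.range k, E i ω)
    (f : ℝ → ℝ≥0∞) (hf : Measurable f) :
    ∫⁻ ω, ∑' k : ℕ, f (T (k + 1) ω) ∂ℙ
      = ENNReal.ofReal r * ∫⁻ x in Ioi (0 : ℝ), f x := by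
  have hlaw (k : ℕ) : Measure.map (T (k + 1)) ℙ = gammaMeasure (k + 1) r := by
    rw [show T (k + 1) = ∑ i ∈ Finset.range (k + 1), E i from
      funext fun ω ↦ by rw [hT, Finset.sum_apply]]
    exact hindep.map_sum_range_eq_gammaMeasure hr hE k
  have hmeas (k : ℕ) : AEMeasurable (T (k + 1)) ℙ := by
    have := isProbabilityMeasure_gammaMeasure (by positivity : (0 : ℝ) < k + 1) hr
    exact .of_map_ne_zero (by rw [hlaw k]; exact IsProbabilityMeasure.ne_zero _)
  rw [lintegral_tsum_comp_eq_lintegral_sum_map (X := fun k ↦ T (k + 1)) hmeas hf]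
  simp_rw [hlaw]
  rw [sum_gammaMeasure_natCast_add_one hr.le, lintegral_smul_measure, smul_eq_mul]
end

section
/- (Almost sure finiteness of the interference.) For every α_d > 1 and every y ≥ 0, the random series Σ_{k=1}^∞ g_k (y + T_k)^{−α_d} converges almost surely to a finite value. -/
/-!
By the strong law of large numbers, applied to the truncations `min E_k 1`, the partial sums `T_k`
grow at least linearly almost surely. The exponential tails of the `g_k` give
`∑ P(g_k > (2/μ) log k) ≤ ∑ k⁻² < ∞`, so by Borel–Cantelli `g_k = O(log k)` almost surely.
The `k`-th term is therefore `O(log k · k^(-α))`, which is summable for `α > 1`.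
-/

open MeasureTheory ProbabilityTheory Set Filter Asymptotics Real Topology

namespace ProbabilityTheory

lemma expMeasure_Ioi {r t : ℝ} (hr : 0 < r) (ht : 0 ≤ t) :
    expMeasure r (Ioi t) = ENNReal.ofReal (exp (-(r * t))) := by
  have := isProbabilityMeasure_expMeasure hr
  have hexp : exp (-(r * t)) ≤ 1 := exp_le_one_iff.2 (neg_nonpos.2 (mul_nonneg hr.le ht))
  rw [← compl_Iic, prob_compl_eq_one_sub measurableSet_Iic, ← ofReal_cdf, cdf_expMeasure_eq hr,
    if_pos ht, ← ENNReal.ofReal_one, ← ENNReal.ofReal_sub _ (sub_nonneg.2 hexp), sub_sub_cancel]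

lemma expMeasure_Iic_zero {r : ℝ} (hr : 0 < r) : expMeasure r (Iic 0) = 0 := by
  have := isProbabilityMeasure_expMeasure hr
  rw [← compl_Ioi, prob_compl_eq_zero_iff measurableSet_Ioi, expMeasure_Ioi hr le_rfl]
  simp

variable {Ω : Type*} [MeasurableSpace Ω] {μ : Measure Ω} {f : Ω → ℝ} {r : ℝ}

lemma aemeasurable_of_map_eq_expMeasure (hr : 0 < r) (hf : μ.map f = expMeasure r) :
    AEMeasurable f μ :=
  .of_map_ne_zero <| hf ▸ (isProbabilityMeasure_expMeasure hr).ne_zero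

lemma ae_nonneg_of_map_eq_expMeasure (hr : 0 < r) (hf : μ.map f = expMeasure r) :
    ∀ᵐ ω ∂μ, 0 ≤ f ω := by
  refine ae_of_ae_map (p := (0 ≤ ·)) (aemeasurable_of_map_eq_expMeasure hr hf) ?_
  rw [hf, ae_iff]
  exact measure_mono_null (fun x hx => not_le.mp hx |>.le) (expMeasure_Iic_zero hr)

lemma measure_lt_of_map_eq_expMeasure (hr : 0 < r) (hf : μ.map f = expMeasure r) {t : ℝ}
    (ht : 0 ≤ t) : μ {ω | t < f ω} = ENNReal.ofReal (exp (-(r * t))) := by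
  rw [← expMeasure_Ioi hr ht, ← hf, Measure.map_apply₀ (aemeasurable_of_map_eq_expMeasure hr hf)
    measurableSet_Ioi.nullMeasurableSet]
  rfl

end ProbabilityTheory

lemma eventually_mul_le_of_tendsto_div {s : ℕ → ℝ} {c m : ℝ}
    (hs : Tendsto (fun n => s n / n) atTop (𝓝 m)) (hcm : c < m) :
    ∀ᶠ n : ℕ in atTop, c * n ≤ s n := by
  filter_upwards [hs.eventually (eventually_ge_nhds hcm), eventually_gt_atTop 0] with n hn hn0
  rwa [le_div_iff₀ (by positivity)] at hn

lemma summable_exp_neg_two_mul_log : Summable fun k : ℕ => exp (-(2 * log k)) := by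
  refine summable_of_isBigO_nat (Real.summable_nat_rpow.mpr (by norm_num : (-2 : ℝ) < -1)) ?_
  refine (isBigO_refl _ _).congr' .rfl ?_
  filter_upwards [eventually_gt_atTop 0] with k hk
  rw [rpow_def_of_pos (by positivity)]
  ring_nf

lemma summable_mul_rpow_neg_of_isBigO_log {a b : ℕ → ℝ} {c α : ℝ} (hc : 0 < c)
    (hα : 1 < α) (ha : a =O[atTop] fun k => log k) (hb : ∀ᶠ k in atTop, c * k ≤ b k) :
    Summable fun k => a k * b k ^ (-α) := by
  obtain ⟨β, hβ, hβα⟩ := exists_between hα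
  have hlog : (fun k : ℕ => log k) =o[atTop] fun k => (k : ℝ) ^ (α - β) :=
    (isLittleO_log_rpow_atTop (by linarith)).comp_tendsto tendsto_natCast_atTop_atTop
  have hb' : (fun k => b k ^ (-α)) =O[atTop] fun k : ℕ => (k : ℝ) ^ (-α) := by
    refine .of_bound (c ^ (-α)) ?_
    filter_upwards [hb, eventually_gt_atTop 0] with k hk hk0
    have hck : 0 < c * k := by positivity
    rw [norm_of_nonneg (rpow_nonneg (hck.le.trans hk) _), norm_of_nonneg (by positivity),
      ← mul_rpow hc.le (by positivity)]
    exact rpow_le_rpow_of_nonpos hck hk (by linarith)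
  refine summable_of_isBigO_nat (Real.summable_nat_rpow.mpr (by linarith : -β < -1)) ?_
  refine ((ha.trans hlog.isBigO).mul hb').congr' .rfl ?_
  filter_upwards [eventually_gt_atTop 0] with k hk
  rw [← rpow_add (by positivity)]
  ring_nf

section

variable {Ω : Type*} [MeasurableSpace Ω] {μ : Measure Ω}

theorem ae_isBigO_log_of_exp_tail {g : ℕ → Ω → ℝ} {r : ℝ} (hr : 0 < r)
    (hnonneg : ∀ k, ∀ᵐ ω ∂μ, 0 ≤ g k ω)
    (htail : ∀ k t, 0 ≤ t → μ {ω | t < g k ω} ≤ ENNReal.ofReal (exp (-(r * t)))) :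
    ∀ᵐ ω ∂μ, (fun k => g k ω) =O[atTop] fun k : ℕ => log k := by
  have hsum : ∑' k : ℕ, μ {ω | 2 / r * log k < g k ω} ≠ ⊤ := by
    refine ne_top_of_le_ne_top ?_ (ENNReal.tsum_le_tsum fun k => htail k _ ?_)
    · simp_rw [← mul_assoc, mul_div_cancel₀ _ hr.ne']
      rw [← ENNReal.ofReal_tsum_of_nonneg (fun _ => (exp_pos _).le) summable_exp_neg_two_mul_log]
      exact ENNReal.ofReal_ne_top
    · exact mul_nonneg (by positivity) (log_natCast_nonneg k)
  filter_upwards [ae_eventually_notMem hsum, ae_all_iff.2 hnonneg] with ω hω hω0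
  refine .of_bound (2 / r) ?_
  filter_upwards [hω] with k hk
  rw [norm_of_nonneg (hω0 k)]
  exact (not_lt.mp hk).trans (mul_le_mul_of_nonneg_left (le_abs_self _) (by positivity))

theorem ae_exists_eventually_mul_le_sum [IsFiniteMeasure μ] {X : ℕ → Ω → ℝ}
    (hindep : Pairwise fun i j => X i ⟂ᵢ[μ] X j)
    (hident : ∀ i, IdentDistrib (X i) (X 0) μ μ)
    (hnonneg : ∀ᵐ ω ∂μ, 0 ≤ X 0 ω) (hpos : μ {ω | 0 < X 0 ω} ≠ 0) :
    ∀ᵐ ω ∂μ, ∃ c > 0, ∀ᶠ n : ℕ in atTop,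
      c * n ≤ ∑ i ∈ Finset.range n, X i ω := by
  -- Truncating makes the strong law available without integrability, and `min x 1 ≤ x`.
  set φ : ℝ → ℝ := fun x => min x 1
  have hφ : Measurable φ := by fun_prop
  have hint : Integrable (φ ∘ X 0) μ := by
    refine .of_bound (hφ.comp_aemeasurable (hident 0).aemeasurable_fst).aestronglyMeasurable 1 ?_
    filter_upwards [hnonneg] with ω hω
    rw [Function.comp_apply, norm_of_nonneg (le_min hω zero_le_one)]
    exact min_le_right _ _
  have hmean : 0 < μ[φ ∘ X 0] := by
    have hφ_nonneg : ∀ᵐ ω ∂μ, 0 ≤ (φ ∘ X 0) ω := by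
      filter_upwards [hnonneg] with ω hω using le_min hω zero_le_one
    rw [integral_pos_iff_support_of_nonneg_ae hφ_nonneg hint]
    refine (pos_iff_ne_zero.2 hpos).trans_le (measure_mono fun ω hω => ?_)
    exact (lt_min hω one_pos).ne'
  filter_upwards [strong_law_ae_real (fun i => φ ∘ X i) hint
    (fun i j hij => (hindep hij).comp hφ hφ) (fun i => (hident i).comp hφ)] with ω hω
  refine ⟨_, half_pos hmean, ?_⟩
  filter_upwards [eventually_mul_le_of_tendsto_div hω (half_lt_self hmean)] with n hn
  exact hn.trans (Finset.sum_le_sum fun i _ => min_le_left _ _)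

end

theorem interference_summable_ae_general
    {Ω : Type*} [MeasureSpace Ω] [IsProbabilityMeasure (ℙ : Measure Ω)]
    (lamD mu : ℝ) (hlam : 0 < lamD) (hmu : 0 < mu)
    (E g : ℕ → Ω → ℝ)
    (hindep : iIndepFun (Sum.elim E g) ℙ)
    (hE : ∀ k, Measure.map (E k) ℙ = expMeasure (2 * lamD))
    (hg : ∀ k, Measure.map (g k) ℙ = expMeasure mu)
    (T : ℕ → Ω → ℝ) (hT : ∀ k ω, T k ω = ∑ i ∈ Finset.range k, E i ω)
    (alpha : ℝ) (ha : 1 < alpha) (y : ℝ) :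
    ∀ᵐ ω ∂ℙ, Summable (fun k : ℕ => g (k + 1) ω * (y + T (k + 1) ω) ^ (-alpha)) := by
  have hr : 0 < 2 * lamD := by positivity
  have hT_linear : ∀ᵐ ω ∂ℙ, ∃ c > 0, ∀ᶠ n : ℕ in atTop, c * n ≤ T n ω := by
    simp_rw [hT]
    refine ae_exists_eventually_mul_le_sum
      (fun i j hij => hindep.indepFun (Sum.inl_injective.ne hij))
      (fun i => ⟨aemeasurable_of_map_eq_expMeasure hr (hE i),
        aemeasurable_of_map_eq_expMeasure hr (hE 0), by rw [hE, hE]⟩)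
      (ae_nonneg_of_map_eq_expMeasure hr (hE 0)) ?_
    simp [measure_lt_of_map_eq_expMeasure hr (hE 0) le_rfl]
  have hg_log : ∀ᵐ ω ∂ℙ, (fun k => g k ω) =O[atTop] fun k : ℕ => log k :=
    ae_isBigO_log_of_exp_tail hmu (fun k => ae_nonneg_of_map_eq_expMeasure hmu (hg k))
      fun k t ht => (measure_lt_of_map_eq_expMeasure hmu (hg k) ht).le
  filter_upwards [hT_linear, hg_log] with ω ⟨c, hc, hTω⟩ hgω
  have hyT : ∀ᶠ n : ℕ in atTop, c / 2 * n ≤ y + T n ω := by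
    filter_upwards [hTω, (tendsto_natCast_atTop_atTop.const_mul_atTop
      (half_pos hc)).eventually_ge_atTop (-y)] with n hn hny
    linarith
  exact (summable_nat_add_iff 1).mpr
    (summable_mul_rpow_neg_of_isBigO_log (half_pos hc) ha hgω hyT)

/-- Almost sure finiteness of the aggregate interference series. -/
theorem interference_summable_ae
    {Ω : Type*} [MeasureSpace Ω] [IsProbabilityMeasure (ℙ : Measure Ω)]
    (lamD mu : ℝ) (hlam : 0 < lamD) (hmu : 0 < mu)
    (E g : ℕ → Ω → ℝ)
    (hindep : iIndepFun (Sum.elim E g) ℙ)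
    (hE : ∀ k, Measure.map (E k) ℙ = expMeasure (2 * lamD))
    (hg : ∀ k, Measure.map (g k) ℙ = expMeasure mu)
    (T : ℕ → Ω → ℝ) (hT : ∀ k ω, T k ω = ∑ i ∈ Finset.range k, E i ω)
    (alpha : ℝ) (ha : 1 < alpha) (y : ℝ) (hy : 0 ≤ y) :
    ∀ᵐ ω ∂ℙ, Summable (fun k : ℕ => g (k + 1) ω * (y + T (k + 1) ω) ^ (-alpha)) :=
  interference_summable_ae_general lamD mu hlam hmu E g hindep hE hg T hT alpha ha y
end
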